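/- arXiv:1211.6246 — 2 statements merged into one kernel-verified Lean document; each statement's English description precedes it below -/
import Mathlib

section
/- Let Λ be a lattice of full rank in ℝ^n, let B > 0, and let H be a k-dimensional affine subspace of ℝ^n with 1 ≤ k < n. Then |Λ ∩ H ∩ [0,B)^n| ≤ n^{k/2} (B + 2ν(Λ))^k (2ν(Λ))^{n−k} / det Λ. -/
/-- The covering radius of a lattice: the supremum over `x` of the distance from `x`
to the nearest lattice point. -/
noncomputable def covRad {n : ℕ} (Λ : Submodule ℤ (EuclideanSpace ℝ (Fin n))) : ℝ :=
  ⨆ x : EuclideanSpace ℝ (Fin n), Metric.infDist x (Λ : Set (EuclideanSpace ℝ (Fin n)))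

/-- The half-open cube `[0, B)^n`. -/
def cube (n : ℕ) (B : ℝ) : Set (EuclideanSpace ℝ (Fin n)) :=
  {x | ∀ i, 0 ≤ x i ∧ x i < B}

/-!
The Voronoi cell of `Λ` is a fundamental domain, hence has volume `det Λ`, and it lies in the
closed ball of radius `ν = ν(Λ)`. So the translates of the cell by the points of
`S = Λ ∩ H ∩ [0,B)^n` are disjoint and lie in the `ν`-neighbourhood of `S`. In an orthonormal
basis adapted to `H` the points of `S` differ by at most `√n B` (the diameter of the cube) in each
of the `k` coordinates along `H` and not at all in the `n - k` others, so that neighbourhood lies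
in a box of volume `(√n B + 2ν)^k (2ν)^(n-k) ≤ n^(k/2) (B + 2ν)^k (2ν)^(n-k)`.
-/

open MeasureTheory Metric Set Module Pointwise RealInnerProductSpace

theorem Real.subset_Icc_sInf_add {s : Set ℝ} (hs : s.Nonempty) {L : ℝ}
    (h : ∀ a ∈ s, ∀ b ∈ s, a - b ≤ L) : s ⊆ Icc (sInf s) (sInf s + L) := by
  obtain ⟨b₀, hb₀⟩ := hs
  have hbdd : BddBelow s := ⟨b₀ - L, fun a ha => by linarith [h b₀ hb₀ a ha]⟩
  refine fun a ha => ⟨csInf_le hbdd ha, ?_⟩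
  have : a - L ≤ sInf s := le_csInf ⟨b₀, hb₀⟩ fun b hb => by linarith [h a ha b hb]
  linarith

section OrthonormalBasis

variable {ι F : Type*} [Fintype ι] [NormedAddCommGroup F] [InnerProductSpace ℝ F]
  [FiniteDimensional ℝ F] [MeasurableSpace F] [BorelSpace F]

theorem OrthonormalBasis.volume_setOf_repr_mem_Icc (b : OrthonormalBasis ι ℝ F) (a d : ι → ℝ) :
    volume {z | ∀ i, b.repr z i ∈ Icc (a i) (d i)} = ∏ i, ENNReal.ofReal (d i - a i) := by
  have hb := b.measurePreserving_measurableEquiv.trans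
    (EuclideanSpace.volume_preserving_symm_measurableEquiv_toLp ι)
  rw [← Real.volume_Icc_pi, ← hb.measure_preimage_equiv]
  congr 1 with z
  simp [Pi.le_def, forall_and, OrthonormalBasis.measurableEquiv]

theorem OrthonormalBasis.volume_biUnion_closedBall_le (b : OrthonormalBasis ι ℝ F) {S : Set F}
    {L : ι → ℝ} (hL : ∀ i, ∀ x ∈ S, ∀ y ∈ S, ⟪b i, x - y⟫ ≤ L i) (r : ℝ) :
    volume (⋃ x ∈ S, closedBall x r) ≤ ∏ i, ENNReal.ofReal (L i + 2 * r) := by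
  rcases S.eq_empty_or_nonempty with rfl | hS
  · simp
  set c : ι → ℝ := fun i => sInf ((⟪b i, ·⟫) '' S)
  have hc : ∀ i, ∀ x ∈ S, ⟪b i, x⟫ ∈ Icc (c i) (c i + L i) := fun i x hx =>
    Real.subset_Icc_sInf_add (hS.image _)
      (by rintro _ ⟨x, hx, rfl⟩ _ ⟨y, hy, rfl⟩; rw [← inner_sub_right]; exact hL i x hx y hy)
      ⟨x, hx, rfl⟩
  calc volume (⋃ x ∈ S, closedBall x r)
      ≤ volume {z | ∀ i, b.repr z i ∈ Icc (c i - r) (c i + L i + r)} := by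
        refine measure_mono (iUnion₂_subset fun x hx z hz i => ?_)
        have hzx : |⟪b i, z⟫ - ⟪b i, x⟫| ≤ r := by
          rw [← inner_sub_right]
          refine (abs_real_inner_le_norm _ _).trans ?_
          rw [b.orthonormal.1 i, one_mul, ← dist_eq_norm]
          exact hz
        rw [b.repr_apply_apply, mem_Icc]
        have := hc i x hx
        constructor <;> linarith [abs_le.1 hzx, this.1, this.2]
    _ = ∏ i, ENNReal.ofReal (L i + 2 * r) := by
        rw [b.volume_setOf_repr_mem_Icc]
        congr! 2 with i
        ring

end OrthonormalBasis

theorem Submodule.exists_orthonormalBasis_sum_orthogonal {F : Type*} [NormedAddCommGroup F]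
    [InnerProductSpace ℝ F] [FiniteDimensional ℝ F] (K : Submodule ℝ F) :
    ∃ b : OrthonormalBasis (Fin (finrank ℝ K) ⊕ Fin (finrank ℝ Kᗮ)) ℝ F,
      (∀ i, b (.inl i) ∈ K) ∧ ∀ j, b (.inr j) ∈ Kᗮ :=
  ⟨((stdOrthonormalBasis ℝ K).prod (stdOrthonormalBasis ℝ Kᗮ)).map K.orthogonalDecomposition.symm,
    by simp, by simp⟩

section Voronoi

variable {E : Type*} [NormedAddCommGroup E] (Λ : Submodule ℤ E)

def voronoiCell : Set E := {x | ∀ y ∈ Λ, y ≠ 0 → ‖x‖ < ‖x - y‖}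

variable {Λ}

theorem norm_le_infDist_of_mem_voronoiCell {x : E} (hx : x ∈ voronoiCell Λ) :
    ‖x‖ ≤ infDist x (Λ : Set E) := by
  refine (le_infDist ⟨0, Λ.zero_mem⟩).2 fun y hy => ?_
  rw [dist_eq_norm]
  rcases eq_or_ne y 0 with rfl | hy0
  · rw [sub_zero]
  · exact (hx y hy hy0).le

theorem voronoiCell_subset_closedBall {r : ℝ} (hr : ∀ x, infDist x (Λ : Set E) ≤ r) :
    voronoiCell Λ ⊆ closedBall 0 r := fun x hx => by
  simpa using (norm_le_infDist_of_mem_voronoiCell hx).trans (hr x)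

theorem disjoint_vadd_voronoiCell {x y : E} (hx : x ∈ Λ) (hy : y ∈ Λ) (hxy : x ≠ y) :
    Disjoint (x +ᵥ voronoiCell Λ) (y +ᵥ voronoiCell Λ) := by
  refine Set.disjoint_left.2 ?_
  rintro _ ⟨u, hu, rfl⟩ ⟨v, hv, huv : y + v = x + u⟩
  have h₁ := hu (y - x) (Λ.sub_mem hy hx) (sub_ne_zero.2 hxy.symm)
  have h₂ := hv (x - y) (Λ.sub_mem hx hy) (sub_ne_zero.2 hxy)
  rw [show u - (y - x) = v by rw [sub_sub_eq_add_sub, add_comm u, ← huv, add_sub_cancel_left]] at h₁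
  rw [show v - (x - y) = u by rw [sub_sub_eq_add_sub, add_comm v, huv, add_sub_cancel_left]] at h₂
  exact h₁.not_gt h₂

variable [InnerProductSpace ℝ E] [FiniteDimensional ℝ E] [DiscreteTopology Λ] [IsZLattice ℝ Λ]
  [MeasurableSpace E] [BorelSpace E]

theorem measurableSet_voronoiCell : MeasurableSet (voronoiCell Λ) := by
  have : voronoiCell Λ = ⋂ y : Λ, ⋂ (_ : (y : E) ≠ 0), {x : E | ‖x‖ < ‖x - y‖} := by
    ext; simp [voronoiCell]
  rw [this]
  exact .iInter fun y => .iInter fun _ => measurableSet_lt (by fun_prop) (by fun_prop)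

/- A point off the countably many perpendicular bisectors of pairs of lattice points has a unique
nearest lattice point, and translating that point to the origin lands in the Voronoi cell. -/
theorem isAddFundamentalDomain_voronoiCell (μ : Measure E) [μ.IsAddHaarMeasure] :
    IsAddFundamentalDomain Λ (voronoiCell Λ) μ := by
  refine ⟨measurableSet_voronoiCell.nullMeasurableSet, ?_,
    fun g g' hgg' => (disjoint_vadd_voronoiCell g.2 g'.2 (by exact_mod_cast hgg')).aedisjoint⟩
  have hnull : ∀ᵐ x ∂μ, ∀ p : Λ × Λ, p.1 ≠ p.2 →
      x ∉ AffineSubspace.perpBisector (p.1 : E) p.2 := by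
    refine ae_all_iff.2 fun p => ?_
    by_cases hp : p.1 = p.2
    · exact .of_forall fun _ h => absurd hp h
    · have := Measure.addHaar_affineSubspace μ _
        fun h => hp (Subtype.coe_injective (AffineSubspace.perpBisector_eq_top.mp h))
      filter_upwards [measure_eq_zero_iff_ae_notMem.mp this] with x hx _ using hx
  filter_upwards [hnull] with x hx
  have hclosed : IsClosed (Λ : Set E) := AddSubgroup.isClosed_of_discrete (H := Λ.toAddSubgroup)
  obtain ⟨y₀, hy₀, hdist⟩ := hclosed.exists_infDist_eq_dist ⟨0, Λ.zero_mem⟩ x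
  refine ⟨-⟨y₀, hy₀⟩, fun y hy hy0 => ?_⟩
  have hne : dist x y₀ ≠ dist x (y₀ + y) := fun h =>
    hx (⟨y₀, hy₀⟩, ⟨y₀ + y, Λ.add_mem hy₀ hy⟩) (by simpa using hy0)
      (AffineSubspace.mem_perpBisector_iff_dist_eq.mpr h)
  have hle : dist x y₀ ≤ dist x (y₀ + y) :=
    hdist ▸ infDist_le_dist_of_mem (Λ.add_mem hy₀ hy)
  rw [dist_eq_norm, dist_eq_norm] at hne hle
  rw [Submodule.vadd_def, vadd_eq_add, show (↑(-⟨y₀, hy₀⟩ : Λ) : E) = -y₀ from rfl,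
    show -y₀ + x - y = x - (y₀ + y) by abel, neg_add_eq_sub]
  exact lt_of_le_of_ne hle hne

theorem ZLattice.ncard_mul_covolume_le_measure_biUnion_closedBall {S : Set E} (hS : S ⊆ Λ) {r : ℝ}
    (hr : ∀ x, infDist x (Λ : Set E) ≤ r) (μ : Measure E) [μ.IsAddHaarMeasure] :
    S.ncard * ENNReal.ofReal (ZLattice.covolume Λ μ) ≤ μ (⋃ x ∈ S, closedBall x r) := by
  obtain hfin | hinf := S.finite_or_infinite
  swap
  · simp [hinf.ncard]
  have hV : ENNReal.ofReal (ZLattice.covolume Λ μ) = μ (voronoiCell Λ) := by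
    rw [ZLattice.covolume_eq_measure_fundamentalDomain Λ μ (isAddFundamentalDomain_voronoiCell μ),
      measureReal_def, ENNReal.ofReal_toReal]
    exact (measure_mono (voronoiCell_subset_closedBall hr)).trans_lt measure_closedBall_lt_top |>.ne
  have hdisj : (hfin.toFinset : Set E).PairwiseDisjoint (· +ᵥ voronoiCell Λ) :=
    fun x hx y hy hxy => disjoint_vadd_voronoiCell (hS (by simpa using hx))
      (hS (by simpa using hy)) hxy
  have hball : ∀ x, x +ᵥ voronoiCell Λ ⊆ closedBall x r := fun x => by
    simpa using vadd_set_mono (a := x) (voronoiCell_subset_closedBall hr)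
  calc S.ncard * ENNReal.ofReal (ZLattice.covolume Λ μ)
      = ∑ x ∈ hfin.toFinset, μ (x +ᵥ voronoiCell Λ) := by
        simp [hV, Set.ncard_eq_toFinset_card S hfin, measure_vadd]
    _ = μ (⋃ x ∈ hfin.toFinset, x +ᵥ voronoiCell Λ) :=
        (measure_biUnion_finset hdisj fun x _ => measurableSet_voronoiCell.const_vadd x).symm
    _ ≤ μ (⋃ x ∈ S, closedBall x r) :=
        measure_mono (biUnion_mono (by simp) fun x _ => hball x)

end Voronoi

theorem ZLattice.bddAbove_range_infDist {E : Type*} [NormedAddCommGroup E] [NormedSpace ℝ E]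
    [FiniteDimensional ℝ E] (Λ : Submodule ℤ E) [DiscreteTopology Λ] [IsZLattice ℝ Λ] :
    BddAbove (range fun x => infDist x (Λ : Set E)) := by
  let b := (Module.Free.chooseBasis ℤ Λ).ofZLatticeBasis ℝ Λ
  refine ⟨∑ i, ‖b i‖, ?_⟩
  rintro _ ⟨x, rfl⟩
  have hfloor : x - ZSpan.fract b x ∈ Λ := by
    rw [ZSpan.fract_apply, sub_sub_cancel]
    exact (Basis.ofZLatticeBasis_span ℝ Λ _).le (ZSpan.floor b x).2
  calc infDist x (Λ : Set E) ≤ dist x (x - ZSpan.fract b x) := infDist_le_dist_of_mem hfloor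
    _ = ‖ZSpan.fract b x‖ := by rw [dist_eq_norm, sub_sub_cancel]
    _ ≤ ∑ i, ‖b i‖ := ZSpan.norm_fract_le b x

section CovRad

variable {n : ℕ} (Λ : Submodule ℤ (EuclideanSpace ℝ (Fin n))) [DiscreteTopology Λ] [IsZLattice ℝ Λ]

theorem infDist_le_covRad (x : EuclideanSpace ℝ (Fin n)) :
    infDist x (Λ : Set (EuclideanSpace ℝ (Fin n))) ≤ covRad Λ :=
  le_ciSup (ZLattice.bddAbove_range_infDist Λ) x

theorem covRad_nonneg : 0 ≤ covRad Λ :=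
  infDist_nonneg.trans (infDist_le_covRad Λ 0)

end CovRad

theorem norm_sub_le_of_mem_cube {n : ℕ} {B : ℝ} (hB : 0 ≤ B) {x y : EuclideanSpace ℝ (Fin n)}
    (hx : x ∈ cube n B) (hy : y ∈ cube n B) : ‖x - y‖ ≤ √n * B := by
  rw [EuclideanSpace.norm_eq, ← Real.sqrt_sq hB, ← Real.sqrt_mul (Nat.cast_nonneg _)]
  gcongr
  have hi : ∀ i ∈ Finset.univ, ‖(x - y) i‖ ^ 2 ≤ B ^ 2 := fun i _ => by
    rw [PiLp.sub_apply, Real.norm_eq_abs, sq_abs]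
    nlinarith [hx i, hy i]
  simpa using Finset.sum_le_card_nsmul _ _ _ hi

theorem sqrt_mul_add_pow_le {n : ℕ} (hn : 1 ≤ n) {a b : ℝ} (ha : 0 ≤ a) (hb : 0 ≤ b) (k : ℕ) :
    (√n * a + b) ^ k ≤ (n : ℝ) ^ ((k : ℝ) / 2) * (a + b) ^ k := by
  have h1 : 1 ≤ √(n : ℝ) := Real.one_le_sqrt.2 (by exact_mod_cast hn)
  rw [Real.rpow_div_two_eq_sqrt _ (Nat.cast_nonneg n), Real.rpow_natCast, ← mul_pow]
  gcongr
  nlinarith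

theorem lattice_points_in_hyperplane_bound_general (n k : ℕ)
    (Λ : Submodule ℤ (EuclideanSpace ℝ (Fin n)))
    [DiscreteTopology Λ] [IsZLattice ℝ Λ] (B : ℝ) (hB : B > 0)
    (H : AffineSubspace ℝ (EuclideanSpace ℝ (Fin n)))
    (hH : Module.finrank ℝ H.direction = k) (hkn : k < n) :
    (((Λ : Set (EuclideanSpace ℝ (Fin n))) ∩ (H : Set (EuclideanSpace ℝ (Fin n))) ∩
        cube n B).ncard : ℝ) ≤
      (n : ℝ) ^ ((k : ℝ) / 2) * (B + 2 * covRad Λ) ^ k * (2 * covRad Λ) ^ (n - k) /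
        ZLattice.covolume Λ := by
  set S := (Λ : Set (EuclideanSpace ℝ (Fin n))) ∩ H ∩ cube n B
  set ν := covRad Λ
  have hν := covRad_nonneg Λ
  obtain ⟨b, -, hb⟩ := H.direction.exists_orthonormalBasis_sum_orthogonal
  have hspread : ∀ i, ∀ x ∈ S, ∀ y ∈ S, ⟪b i, x - y⟫ ≤ Sum.elim (fun _ => √n * B) 0 i := by
    rintro (i | j) x ⟨⟨-, hxH⟩, hx⟩ y ⟨⟨-, hyH⟩, hy⟩
    · refine (real_inner_le_norm _ _).trans ?_
      rw [b.orthonormal.1, one_mul]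
      exact norm_sub_le_of_mem_cube hB.le hx hy
    · exact (Submodule.inner_left_of_mem_orthogonal (H.vsub_mem_direction hxH hyH) (hb j)).le
  have hdim : finrank ℝ H.directionᗮ = n - k := by
    have := H.direction.finrank_add_finrank_orthogonal
    rw [finrank_euclideanSpace_fin] at this
    omega
  have hvol := (ZLattice.ncard_mul_covolume_le_measure_biUnion_closedBall (S := S)
    (fun x hx => hx.1.1) (infDist_le_covRad Λ) volume).trans
    (b.volume_biUnion_closedBall_le hspread ν)
  simp only [Fintype.prod_sum_type, Sum.elim_inl, Sum.elim_inr, Pi.zero_apply, zero_add,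
    Finset.prod_const, Finset.card_univ, Fintype.card_fin, hH, hdim] at hvol
  rw [← ENNReal.ofReal_natCast, ← ENNReal.ofReal_mul (by positivity),
    ← ENNReal.ofReal_pow (by positivity), ← ENNReal.ofReal_pow (by positivity),
    ← ENNReal.ofReal_mul (by positivity), ENNReal.ofReal_le_ofReal_iff (by positivity)] at hvol
  rw [le_div_iff₀ (ZLattice.covolume_pos Λ volume)]
  refine hvol.trans ?_
  gcongr
  exact sqrt_mul_add_pow_le (by omega) hB.le (by positivity) k

theorem lattice_points_in_hyperplane_bound (n k : ℕ)
    (Λ : Submodule ℤ (EuclideanSpace ℝ (Fin n)))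
    [DiscreteTopology Λ] [IsZLattice ℝ Λ] (B : ℝ) (hB : B > 0)
    (H : AffineSubspace ℝ (EuclideanSpace ℝ (Fin n)))
    (hH : Module.finrank ℝ H.direction = k) (hk1 : 1 ≤ k) (hkn : k < n) :
    (((Λ : Set (EuclideanSpace ℝ (Fin n))) ∩ (H : Set (EuclideanSpace ℝ (Fin n))) ∩
        cube n B).ncard : ℝ) ≤
      (n : ℝ) ^ ((k : ℝ) / 2) * (B + 2 * covRad Λ) ^ k * (2 * covRad Λ) ^ (n - k) /
        ZLattice.covolume Λ :=
  lattice_points_in_hyperplane_bound_general n k Λ B hB H hH hkn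
end

section
/- For every natural number n ≥ 1, the coprimality probability p_n = |{(x,y) ∈ ℕ² : 0 ≤ x,y ≤ n, gcd(x,y) = 1}| / (n+1)² satisfies p_n ≥ (6/π²)·n²/(n+1)² − (n·log n)/(n+1)² − (3n)/(2(n+1)²) + 1/(n+1)². -/
/-!
Möbius inversion over the divisors of `gcd x y` counts the coprime pairs in `{0, …, n}²`
exactly: there are `∑_{d ≤ n} μ(d) ((⌊n/d⌋ + 1)² - 1)` of them, and since
`∑_{d ≤ n} μ(d) ⌊n/d⌋ = 1` this is `1 + ∑_{d ≤ n} μ(d) ⌊n/d⌋ (⌊n/d⌋ + 1)`.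
For `q = ⌊x⌋` the product `q (q + 1)` differs from `x²` by at most `x`, so the term of `d ≥ 2`
is at least `μ(d) n²/d² - n/d`, while the term of `d = 1` is exactly `n² + n`.
With `∑_{d ≤ n} μ(d)/d² ≥ 6/π² - 1/n` (the tail of `∑ μ(d)/d² = 1/ζ(2)` is at most
`∑_{d > n} 1/d²`) and `∑_{2 ≤ d ≤ n} 1/d ≤ log n`, the count is at least
`(6/π²) n² - n log n + 1`, which beats the claimed bound by `3n/2`.
-/

/-- The probability that two integers chosen uniformly and independently from `{0, 1, …, n}`
are coprime. -/
noncomputable def coprimeProb (n : ℕ) : ℝ :=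
  (((Finset.range (n + 1) ×ˢ Finset.range (n + 1)).filter
      fun p => Nat.gcd p.1 p.2 = 1).card : ℝ) / ((n : ℝ) + 1) ^ 2

open Finset ArithmeticFunction Real Filter
open scoped ArithmeticFunction.Moebius

theorem card_filter_eq_one_eq_sum_moebius {ι : Type*} (s : Finset ι) (f : ι → ℕ) {N : ℕ}
    (hf : ∀ i ∈ s, f i ∈ Icc 1 N) :
    (#{i ∈ s | f i = 1} : ℤ) = ∑ d ∈ Icc 1 N, μ d * #{i ∈ s | d ∣ f i} := by
  have hdiv : ∀ i ∈ s, {d ∈ Icc 1 N | d ∣ f i} = (f i).divisors := by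
    intro i hi
    have hfi := mem_Icc.mp (hf i hi)
    ext d
    simp only [mem_filter, mem_Icc, Nat.mem_divisors]
    constructor
    · rintro ⟨-, hd⟩; exact ⟨hd, by omega⟩
    · rintro ⟨hd, -⟩
      exact ⟨⟨Nat.pos_of_dvd_of_pos hd (by omega), (Nat.le_of_dvd (by omega) hd).trans hfi.2⟩, hd⟩
  calc (#{i ∈ s | f i = 1} : ℤ) = ∑ i ∈ s, ∑ d ∈ (f i).divisors, μ d := by
        rw [card_filter, Nat.cast_sum]
        refine sum_congr rfl fun i _ => ?_
        rw [← coe_mul_zeta_apply, moebius_mul_coe_zeta, one_apply]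
        split_ifs <;> rfl
    _ = ∑ i ∈ s, ∑ d ∈ Icc 1 N, if d ∣ f i then μ d else 0 := by
        refine sum_congr rfl fun i hi => ?_
        rw [← sum_filter, hdiv i hi]
    _ = ∑ d ∈ Icc 1 N, μ d * #{i ∈ s | d ∣ f i} := by
        rw [sum_comm]
        refine sum_congr rfl fun d _ => ?_
        rw [← sum_filter, sum_const, nsmul_eq_mul, mul_comm]

theorem card_range_filter_dvd (n d : ℕ) : #{x ∈ range (n + 1) | d ∣ x} = n / d + 1 := by
  rw [range_eq_Ico, Ico_add_one_right_eq_Icc, Icc_eq_cons_Ioc (Nat.zero_le n),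
    filter_cons_of_pos _ _ _ _ (dvd_zero d), card_cons, Nat.Ioc_filter_dvd_card_eq_div]

theorem sum_moebius_mul_div_eq_one {n : ℕ} (hn : 1 ≤ n) :
    ∑ d ∈ Icc 1 n, μ d * (n / d : ℕ) = 1 := by
  have h := card_filter_eq_one_eq_sum_moebius (Ioc 0 n) id (N := n) fun i hi => by
    rw [mem_Ioc] at hi
    exact mem_Icc.mpr hi
  simp only [id, Nat.Ioc_filter_dvd_card_eq_div] at h
  rw [← h, filter_eq', if_pos (mem_Ioc.mpr ⟨one_pos, hn⟩), card_singleton, Nat.cast_one]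

theorem card_coprime_pairs_eq_sum_moebius (n : ℕ) :
    (#{p ∈ range (n + 1) ×ˢ range (n + 1) | p.1.gcd p.2 = 1} : ℤ) =
      ∑ d ∈ Icc 1 n, μ d * (((n / d + 1) ^ 2 - 1 : ℕ) : ℤ) := by
  -- `gcd 0 0 = 0` is not in `Icc 1 n`, so the sieve runs over the pairs other than `(0, 0)`.
  set S := (range (n + 1) ×ˢ range (n + 1)).erase (0, 0)
  have hgcd : ∀ p ∈ S, p.1.gcd p.2 ∈ Icc 1 n := by
    rintro ⟨x, y⟩ hp
    simp only [S, mem_erase, ne_eq, Prod.mk.injEq, mem_product, mem_range] at hp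
    rw [mem_Icc, Nat.one_le_iff_ne_zero, Ne, Nat.gcd_eq_zero_iff]
    refine ⟨hp.1, ?_⟩
    rcases Nat.eq_zero_or_pos x with rfl | hx
    · rw [Nat.gcd_zero_left]; omega
    · exact (Nat.gcd_le_left y hx).trans (by omega)
  have hS : #{p ∈ range (n + 1) ×ˢ range (n + 1) | p.1.gcd p.2 = 1} =
      #{p ∈ S | p.1.gcd p.2 = 1} := by
    rw [filter_erase, erase_eq_of_notMem (by simp)]
  rw [hS, card_filter_eq_one_eq_sum_moebius S _ hgcd]
  refine sum_congr rfl fun d _ => ?_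
  rw [filter_erase, card_erase_of_mem (by simp)]
  simp only [Nat.dvd_gcd_iff]
  rw [filter_product, card_product, card_range_filter_dvd, sq]

theorem card_coprime_pairs_eq {n : ℕ} (hn : 1 ≤ n) :
    (#{p ∈ range (n + 1) ×ˢ range (n + 1) | p.1.gcd p.2 = 1} : ℤ) =
      1 + ∑ d ∈ Icc 1 n, μ d * ((n / d : ℕ) * ((n / d : ℕ) + 1) : ℤ) := by
  have hterm : ∀ d ∈ Icc 1 n, μ d * (((n / d + 1) ^ 2 - 1 : ℕ) : ℤ) =
      μ d * (n / d : ℕ) + μ d * ((n / d : ℕ) * ((n / d : ℕ) + 1) : ℤ) := fun d _ => by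
    rw [Nat.cast_sub (Nat.one_le_pow _ _ (Nat.succ_pos _))]
    push_cast
    ring
  rw [card_coprime_pairs_eq_sum_moebius, sum_congr rfl hterm, sum_add_distrib,
    sum_moebius_mul_div_eq_one hn]

theorem hasSum_moebius_div_sq : HasSum (fun d : ℕ => (μ d : ℝ) / (d : ℝ) ^ 2) (6 / π ^ 2) := by
  have h2 : 1 < (2 : ℂ).re := by norm_num
  have hL : LSeries (fun d => (μ d : ℂ)) 2 = ((6 / π ^ 2 : ℝ) : ℂ) := by
    have h := LSeries_zeta_mul_Lseries_moebius h2
    rw [LSeries_zeta_eq_riemannZeta h2, riemannZeta_two] at h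
    have hπ : (π : ℂ) ≠ 0 := Complex.ofReal_ne_zero.mpr pi_ne_zero
    push_cast
    rw [eq_div_iff (pow_ne_zero 2 hπ)]
    linear_combination 6 * h
  have hterm : LSeries.term (fun d => (μ d : ℂ)) 2 =
      fun d => (((μ d : ℝ) / (d : ℝ) ^ 2 : ℝ) : ℂ) := by
    funext d
    rcases eq_or_ne d 0 with rfl | hd
    · simp
    · rw [LSeries.term_of_ne_zero hd, show (2 : ℂ) = ((2 : ℕ) : ℂ) by norm_num,
        Complex.cpow_natCast]
      push_cast
      rfl
  have : HasSum (LSeries.term (fun d => (μ d : ℂ)) 2) (LSeries (fun d => (μ d : ℂ)) 2) :=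
    (LSeriesSummable_moebius_iff.mpr h2).hasSum
  rw [hterm, hL] at this
  exact Complex.hasSum_ofReal.mp this

theorem HasSum.sub_inv_le_sum_range {f : ℕ → ℝ} {s : ℝ} (hf : HasSum f s)
    (hbound : ∀ d, |f d| ≤ ((d : ℝ) ^ 2)⁻¹) {n : ℕ} (hn : n ≠ 0) :
    s - (n : ℝ)⁻¹ ≤ ∑ d ∈ range (n + 1), f d := by
  have htail : ∀ m ≥ n, ∑ d ∈ range (m + 1), f d ≤ ∑ d ∈ range (n + 1), f d + (n : ℝ)⁻¹ := by
    intro m hm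
    rw [← sum_range_add_sum_Ico _ (by omega : n + 1 ≤ m + 1), Ico_add_one_add_one_eq_Ioc]
    gcongr
    calc ∑ d ∈ Ioc n m, f d ≤ ∑ d ∈ Ioc n m, ((d : ℝ) ^ 2)⁻¹ :=
          sum_le_sum fun d _ => (le_abs_self _).trans (hbound d)
      _ ≤ (n : ℝ)⁻¹ - (m : ℝ)⁻¹ := sum_Ioc_inv_sq_le_sub hn hm
      _ ≤ (n : ℝ)⁻¹ := by simp
  have hlim := hf.tendsto_sum_nat.comp (tendsto_add_atTop_nat 1)
  have := le_of_tendsto hlim (eventually_atTop.mpr ⟨n, htail⟩)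
  linarith

theorem sub_inv_le_sum_moebius_div_sq {n : ℕ} (hn : n ≠ 0) :
    6 / π ^ 2 - (n : ℝ)⁻¹ ≤ ∑ d ∈ Icc 1 n, (μ d : ℝ) / (d : ℝ) ^ 2 := by
  have hbound : ∀ d : ℕ, |(μ d : ℝ) / (d : ℝ) ^ 2| ≤ ((d : ℝ) ^ 2)⁻¹ := fun d => by
    rw [abs_div, abs_of_nonneg (sq_nonneg (d : ℝ)), div_eq_mul_inv]
    exact mul_le_of_le_one_left (by positivity) (mod_cast abs_moebius_le_one)
  convert hasSum_moebius_div_sq.sub_inv_le_sum_range hbound hn using 1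
  rw [range_eq_Ico, sum_eq_sum_Ico_succ_bot (Nat.succ_pos n)]
  simp [Ico_add_one_right_eq_Icc]

theorem abs_sq_sub_floor_mul_floor_add_one_le {x : ℝ} (hx : 0 ≤ x) :
    |x ^ 2 - ⌊x⌋₊ * (⌊x⌋₊ + 1)| ≤ x := by
  have h1 := Nat.floor_le hx
  have h2 := Nat.lt_floor_add_one x
  rw [abs_le]
  constructor <;> nlinarith

theorem mul_sq_sub_le_mul_floor_mul_floor_add_one {c x : ℝ} (hc : |c| ≤ 1) (hx : 0 ≤ x) :
    c * x ^ 2 - x ≤ c * (⌊x⌋₊ * (⌊x⌋₊ + 1)) := by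
  have h : c * (x ^ 2 - ⌊x⌋₊ * (⌊x⌋₊ + 1)) ≤ x :=
    calc c * (x ^ 2 - ⌊x⌋₊ * (⌊x⌋₊ + 1)) ≤ |c| * |x ^ 2 - ⌊x⌋₊ * (⌊x⌋₊ + 1)| :=
          (le_abs_self _).trans (abs_mul _ _).le
      _ ≤ 1 * x :=
          mul_le_mul hc (abs_sq_sub_floor_mul_floor_add_one_le hx) (abs_nonneg _) zero_le_one
      _ = x := one_mul x
  linarith

theorem sum_Ioc_one_inv_le_log (n : ℕ) : ∑ d ∈ Ioc 1 n, (d : ℝ)⁻¹ ≤ Real.log n := by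
  rcases Nat.eq_zero_or_pos n with rfl | hn
  · simp
  have h := harmonic_le_one_add_log n
  rw [harmonic_eq_sum_Icc, Icc_eq_cons_Ioc hn, sum_cons] at h
  push_cast at h
  linarith

theorem le_card_coprime_pairs {n : ℕ} (hn : 1 ≤ n) :
    6 / π ^ 2 * (n : ℝ) ^ 2 - n * Real.log n + 1 ≤
      #{p ∈ range (n + 1) ×ˢ range (n + 1) | p.1.gcd p.2 = 1} := by
  have hcount : (#{p ∈ range (n + 1) ×ˢ range (n + 1) | p.1.gcd p.2 = 1} : ℝ) =
      1 + ∑ d ∈ Icc 1 n, (μ d : ℝ) * (⌊(n : ℝ) / d⌋₊ * (⌊(n : ℝ) / d⌋₊ + 1)) := by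
    have h := congrArg (Int.cast : ℤ → ℝ) (card_coprime_pairs_eq hn)
    simp only [Int.cast_natCast, Int.cast_add, Int.cast_one, Int.cast_sum, Int.cast_mul] at h
    simpa only [Nat.floor_div_eq_div] using h
  have hsplit : ∀ f : ℕ → ℝ, ∑ d ∈ Icc 1 n, f d = f 1 + ∑ d ∈ Ioc 1 n, f d := fun f => by
    rw [Icc_eq_cons_Ioc hn, sum_cons]
  have hterm : ∀ d ∈ Ioc 1 n, (μ d : ℝ) * ((n : ℝ) / d) ^ 2 - (n : ℝ) / d ≤
      (μ d : ℝ) * (⌊(n : ℝ) / d⌋₊ * (⌊(n : ℝ) / d⌋₊ + 1)) := fun d _ =>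
    mul_sq_sub_le_mul_floor_mul_floor_add_one (mod_cast abs_moebius_le_one) (by positivity)
  have hquad : ∑ d ∈ Ioc 1 n, (μ d : ℝ) * ((n : ℝ) / d) ^ 2 =
      (n : ℝ) ^ 2 * ∑ d ∈ Ioc 1 n, (μ d : ℝ) / (d : ℝ) ^ 2 := by
    rw [mul_sum]
    exact sum_congr rfl fun d _ => by ring
  have hlin : ∑ d ∈ Ioc 1 n, (n : ℝ) / d = n * ∑ d ∈ Ioc 1 n, (d : ℝ)⁻¹ := by
    rw [mul_sum]
    rfl
  have hmoeb := sub_inv_le_sum_moebius_div_sq (n := n) (by omega)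
  have hharm := sum_Ioc_one_inv_le_log n
  have hsum := sum_le_sum hterm
  rw [sum_sub_distrib, hquad, hlin] at hsum
  rw [hsplit] at hmoeb
  rw [hcount, hsplit]
  simp only [moebius_apply_one, Int.cast_one, Nat.cast_one, div_one, one_pow,
    Nat.floor_natCast] at hmoeb ⊢
  have hn0 : (0 : ℝ) < n := by exact_mod_cast hn
  have h1 := mul_le_mul_of_nonneg_left hmoeb (sq_nonneg (n : ℝ))
  have h2 := mul_le_mul_of_nonneg_left hharm hn0.le
  rw [mul_sub, mul_add, mul_one, sq, mul_inv_cancel_right₀ hn0.ne'] at h1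
  linarith

theorem coprime_prob_lower_bound (n : ℕ) (hn : 1 ≤ n) :
    coprimeProb n ≥ 6 / Real.pi ^ 2 * ((n : ℝ) ^ 2 / ((n : ℝ) + 1) ^ 2) -
      (n : ℝ) * Real.log n / ((n : ℝ) + 1) ^ 2 - 3 * (n : ℝ) / (2 * ((n : ℝ) + 1) ^ 2) +
      1 / ((n : ℝ) + 1) ^ 2 := by
  have hpos : (0 : ℝ) < ((n : ℝ) + 1) ^ 2 := by positivity
  rw [coprimeProb, ge_iff_le, le_div_iff₀ hpos]
  calc _ = 6 / π ^ 2 * (n : ℝ) ^ 2 - n * Real.log n - 3 * (n : ℝ) / 2 + 1 := by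
        field_simp
    _ ≤ 6 / π ^ 2 * (n : ℝ) ^ 2 - n * Real.log n + 1 := by
        linarith [(Nat.cast_nonneg n : (0 : ℝ) ≤ n)]
    _ ≤ _ := le_card_coprime_pairs hn
end
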